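/- arXiv:2407.11009 — 4 statements merged into one kernel-verified Lean document; each statement's English description precedes it below -/
import Mathlib

section
/- With notation as in the telescoping identity: for a token distribution d₀ and any string z = c₁⋯c_n such that every character has positive marginal at each step, the probability that character-level sampling (sample c_k from the marginal of d_{k-1}, then condition and strip) produces the prefix z equals the probability under d₀ that the sampled token has z as a prefix (where a token equal to z counts as having z as a prefix), i.e., it equals ∑_{t : z is a prefix of t} d₀(t). -/
variable {A : Type*} [DecidableEq A]

/-- Marginal probability that the next character is `c`, under table `d` supported on `T`. -/
noncomputable def margP (T : Finset (List A)) (d : List A → ℝ) (c : A) : ℝ :=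
  ∑ t ∈ T.filter (fun t => t.head? = some c), d t

/-- Prune the table to tokens starting with `c` and strip the first character. -/
def stepT (T : Finset (List A)) (c : A) : Finset (List A) :=
  (T.filter (fun t => t.head? = some c)).image List.tail

/-- The renormalized table after conditioning on first character `c` and stripping it. -/
noncomputable def stepD (T : Finset (List A)) (d : List A → ℝ) (c : A) : List A → ℝ :=
  fun s => (∑ t ∈ T.filter (fun t => t.head? = some c ∧ t.tail = s), d t) / margP T d c

/-- Iterate the conditioning/stripping process along the characters of `z`. -/
noncomputable def proc : Finset (List A) → (List A → ℝ) → List A → Finset (List A) × (List A → ℝ)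
  | T, d, [] => (T, d)
  | T, d, c :: z => proc (stepT T c) (stepD T d c) z

/-- Product of the per-step marginal character probabilities along `z`. -/
noncomputable def prodP : Finset (List A) → (List A → ℝ) → List A → ℝ
  | _, _, [] => 1
  | T, d, c :: z => margP T d c * prodP (stepT T c) (stepD T d c) z

/-- Every per-step marginal along `z` is positive. -/
def posAlong : Finset (List A) → (List A → ℝ) → List A → Prop
  | _, _, [] => True
  | T, d, c :: z => 0 < margP T d c ∧ posAlong (stepT T c) (stepD T d c) z

lemma head?_tail_eq {t : List A} {c : A} (h : t.head? = some c) : t = c :: t.tail := by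
  cases t with
  | nil => simp at h
  | cons a l => simp_all

lemma mem_stepT {T : Finset (List A)} {c : A} {s : List A} :
    s ∈ stepT T c ↔ c :: s ∈ T := by
  constructor
  · intro h
    simp only [stepT, Finset.mem_image, Finset.mem_filter] at h
    obtain ⟨t, ⟨ht, hh⟩, hts⟩ := h
    have := head?_tail_eq hh
    rw [hts] at this
    rwa [← this]
  · intro h
    simp only [stepT, Finset.mem_image, Finset.mem_filter]
    exact ⟨c :: s, ⟨h, rfl⟩, rfl⟩

lemma stepD_eq (T : Finset (List A)) (d : List A → ℝ) (c : A) (s : List A) :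
    stepD T d c s = (if c :: s ∈ T then d (c :: s) else 0) / margP T d c := by
  unfold stepD
  congr 1
  have hfe : T.filter (fun t => t.head? = some c ∧ t.tail = s)
      = T.filter (fun t => t = c :: s) := by
    apply Finset.filter_congr
    intro t _
    constructor
    · rintro ⟨h1, h2⟩
      have := head?_tail_eq h1
      rw [h2] at this
      exact this
    · rintro rfl; exact ⟨rfl, rfl⟩
  rw [hfe, Finset.sum_filter]
  simp

lemma tail_injOn (T : Finset (List A)) (c : A) :
    Set.InjOn List.tail ((T.filter (fun t => t.head? = some c) : Finset (List A)) : Set (List A)) := by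
  intro t1 h1 t2 h2 h
  simp only [Finset.coe_filter, Set.mem_setOf_eq] at h1 h2
  rw [head?_tail_eq h1.2, head?_tail_eq h2.2, h]

lemma sum_stepT (T : Finset (List A)) (c : A) (f : List A → ℝ) :
    ∑ s ∈ stepT T c, f s = ∑ t ∈ T.filter (fun t => t.head? = some c), f t.tail := by
  rw [stepT, Finset.sum_image (fun t h1 t2 h2 h => tail_injOn T c h1 h2 h)]

lemma char_sampling_aux (z : List A) :
    ∀ (T : Finset (List A)) (d : List A → ℝ), (∀ t, 0 ≤ d t) → (∀ t ∉ T, d t = 0) →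
    (∑ t ∈ T, d t = 1) → posAlong T d z →
    prodP T d z = ∑ t ∈ T.filter (fun t => z <+: t), d t := by
  induction z with
  | nil =>
    intro T d _ _ hd1 _
    simpa [prodP, List.nil_prefix] using hd1.symm
  | cons c z ih =>
    intro T d hd0 hsupp hd1 hpos
    obtain ⟨hm, hpos'⟩ := hpos
    have hm' : margP T d c ≠ 0 := ne_of_gt hm
    -- properties of stepD
    have hd0' : ∀ s, 0 ≤ stepD T d c s := by
      intro s
      rw [stepD_eq]
      apply div_nonneg _ (le_of_lt hm)
      split
      · exact hd0 _
      · exact le_refl 0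
    have hsupp' : ∀ s ∉ stepT T c, stepD T d c s = 0 := by
      intro s hs
      rw [stepD_eq, if_neg (fun h => hs (mem_stepT.mpr h)), zero_div]
    have hsum : ∑ s ∈ stepT T c, stepD T d c s = 1 := by
      have : ∑ s ∈ stepT T c, stepD T d c s
          = (∑ s ∈ stepT T c, d (c :: s)) / margP T d c := by
        rw [Finset.sum_div]
        apply Finset.sum_congr rfl
        intro s hs
        rw [stepD_eq, if_pos (mem_stepT.mp hs)]
      rw [this, sum_stepT]
      rw [div_eq_one_iff_eq hm']
      unfold margP
      apply Finset.sum_congr rfl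
      intro t ht
      simp only [Finset.mem_filter] at ht
      rw [← head?_tail_eq ht.2]
    have key := ih (stepT T c) (stepD T d c) hd0' hsupp' hsum hpos'
    rw [prodP, key]
    -- push the sum back
    have step1 : ∑ s ∈ (stepT T c).filter (fun s => z <+: s), stepD T d c s
        = (∑ s ∈ (stepT T c).filter (fun s => z <+: s), d (c :: s)) / margP T d c := by
      rw [Finset.sum_div]
      apply Finset.sum_congr rfl
      intro s hs
      simp only [Finset.mem_filter] at hs
      rw [stepD_eq, if_pos (mem_stepT.mp hs.1)]
    rw [step1, mul_div_cancel₀ _ hm']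
    -- now a bijection between the two index sets
    have himg : (stepT T c).filter (fun s => z <+: s)
        = (T.filter (fun t => (c :: z) <+: t)).image List.tail := by
      ext s
      simp only [Finset.mem_filter, Finset.mem_image]
      constructor
      · rintro ⟨hs, hz⟩
        exact ⟨c :: s, ⟨mem_stepT.mp hs, by simpa using hz⟩, rfl⟩
      · rintro ⟨t, ⟨ht, hz⟩, rfl⟩
        obtain ⟨u, hu⟩ := hz
        have : t = c :: (z ++ u) := by rw [← hu]; rfl
        constructor
        · apply mem_stepT.mpr
          rw [this] at ht ⊢
          simpa using ht
        · rw [this]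
          exact ⟨u, rfl⟩
    rw [himg]
    have hinj : Set.InjOn List.tail ((T.filter (fun t => (c :: z) <+: t) : Finset (List A)) : Set (List A)) := by
      intro t1 h1 t2 h2 h
      simp only [Finset.coe_filter, Set.mem_setOf_eq] at h1 h2
      obtain ⟨u1, hu1⟩ := h1.2
      obtain ⟨u2, hu2⟩ := h2.2
      rw [← hu1, ← hu2] at h ⊢
      simp only [List.cons_append, List.tail_cons] at h
      simp [List.append_cancel_left h]
    rw [Finset.sum_image (fun t h1 t2 h2 h => hinj h1 h2 h)]
    apply Finset.sum_congr rfl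
    intro t ht
    simp only [Finset.mem_filter] at ht
    obtain ⟨u, hu⟩ := ht.2
    rw [← hu]
    rfl

/-- the probability that character-level sampling (sample each character from
the current marginal, then condition and strip) produces exactly the character sequence
`z` equals the probability under `d` that the sampled token has `z` as a prefix
(a token equal to `z` counts as having `z` as a prefix). -/
theorem char_sampling_prefix_probability {A : Type*} [DecidableEq A]
    (T : Finset (List A)) (hT : ∀ t ∈ T, t ≠ [])
    (d : List A → ℝ)
    (hd0 : ∀ t, 0 ≤ d t) (hsupp : ∀ t ∉ T, d t = 0) (hd1 : ∑ t ∈ T, d t = 1)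
    (z : List A)
    (hpos : posAlong T d z) :
    prodP T d z = ∑ t ∈ T.filter (fun t => z <+: t), d t := by
  exact char_sampling_aux z T d hd0 hsupp hd1 hpos
end

section
/- Let Σ be a finite alphabet and let M assign to every string-prompt l a probability distribution P_M(·|l) over Σ* (finite support). Define character-level decoding of M as the process that, given prompt l, generates output character by character via marginalization, conditioning/stripping, and refresh (re-querying M with the generated prefix appended when the empty string/end-of-token is sampled). Then for every prompt l and every finite string z, the probability that M's autoregressive token-level generation produces the character sequence z equals the probability that character-level decoding of M produces z. -/
variable {A : Type*} [DecidableEq A]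

/-- Remove the end-of-token entry (the empty string) and renormalize. -/
noncomputable def eotStrip (d : List A → ℝ) : List A → ℝ :=
  fun s => if s = [] then 0 else d s / (1 - d [])

/-- Fuel-indexed token-level generation probability: `strA M n l z` is the probability
that autoregressive token-level generation from `M` with prompt `l` produces the
character sequence `z` within `n` tokens, i.e. the sum over tokenizations
`(t₁,…,t_k)` of `z` of `∏ᵢ M (l·t₁⋯t_{i-1}) tᵢ`. -/
noncomputable def strA (M : List A → List A → ℝ) : ℕ → List A → List A → ℝ
  | 0, _, z => if z = [] then 1 else 0
  | n + 1, l, z =>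
    if z = [] then 1
    else ∑ k ∈ Finset.range z.length,
      M l (z.take (k + 1)) * strA M n (l ++ z.take (k + 1)) (z.drop (k + 1))

/-- Probability that token-level generation from `M` with prompt `l` produces exactly
the character sequence `z` (at a token boundary); `z.length` tokens always suffice. -/
noncomputable def strProb (M : List A → List A → ℝ) (l z : List A) : ℝ :=
  strA M z.length l z

/-- Fuel-indexed character-level decoding probability. Mode `true`: the table has just
been refreshed from the model (queried at the current prompt-plus-output), so it is the
model's token distribution; mode `false`: mid-token state with table `d` on `T`, where
the empty string entry `d []` is the end-of-token probability. At each step, EOT is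
resolved (refreshing the table on EOT), otherwise the next character is sampled from the
marginal and the table is pruned, stripped, and renormalized. `genA … lz T d z` is the
probability of emitting exactly the remaining characters `z` and then reaching a token
boundary (sampling EOT). -/
noncomputable def genA (M : List A → List A → ℝ) (tok : List A → Finset (List A)) :
    ℕ → Bool → List A → Finset (List A) → (List A → ℝ) → List A → ℝ
  | 0, _, _, _, _, _ => 0
  | _ + 1, true, _, _, _, [] => 1
  | n + 1, true, lz, _, _, c :: z =>
      margP (tok lz) (M lz) c *
        genA M tok n false (lz ++ [c]) (stepT (tok lz) c) (stepD (tok lz) (M lz) c) z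
  | _ + 1, false, _, _, d, [] => d []
  | n + 1, false, lz, T, d, c :: z =>
      d [] * genA M tok n true lz T d (c :: z) +
      (1 - d []) * (margP T (eotStrip d) c *
        genA M tok n false (lz ++ [c]) (stepT T c) (stepD T (eotStrip d) c) z)

/-- Probability that character-level decoding of `M` with prompt `l` produces exactly
the character sequence `z` (ending at a token boundary). -/
noncomputable def charProb (M : List A → List A → ℝ) (tok : List A → Finset (List A))
    (l z : List A) : ℝ :=
  genA M tok (2 * z.length + 2) true l ∅ (fun _ => 0) z

/-!
Character-level decoding computes, state by state, an explicit token-level quantity. Right after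
a refresh at context `lz` it emits `z` with probability `strProb M lz z`; in the middle of a token
with pending table `d` it emits `z` with probability
`pendingProb M lz d z = ∑ⱼ d (z.take j) * strProb M (lz ++ z.take j) (z.drop j)`: first finish the
current token with a prefix of `z`, then continue token by token. Both claims follow together by
induction on `z`. Sampling `c` from the marginal and conditioning satisfies
`margP T d c * stepD T d c s = d (c :: s)`, which is exactly the first-character decomposition of
these sums; mid-token, the end-of-token branch of weight `d []` yields the term in which the
current token ends before `c`, and `(1 - d []) * eotStrip d s = d s` for `s ≠ []` the others.
-/

lemma List.head?_eq_some_and_tail_eq_iff {α : Type*} {t s : List α} {c : α} :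
    t.head? = some c ∧ t.tail = s ↔ t = c :: s := by
  cases t <;> simp [eq_comm]

section Weights

variable {α : Type*} {T : Finset (List α)} {d : List α → ℝ}

structure IsWeightOn (T : Finset (List α)) (d : List α → ℝ) : Prop where
  nonneg : ∀ s, 0 ≤ d s
  eq_zero_of_not_mem : ∀ s ∉ T, d s = 0

structure IsDistOn (T : Finset (List α)) (d : List α → ℝ) : Prop extends IsWeightOn T d where
  sum_eq_one : ∑ s ∈ T, d s = 1

lemma IsDistOn.eq_zero_of_nil_eq_one (hd : IsDistOn T d) (h1 : d [] = 1) {s : List α}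
    (hs : s ≠ []) : d s = 0 := by
  classical
  by_cases hsT : s ∈ T
  · have hnil : [] ∈ T := by
      by_contra hnil
      rw [hd.eq_zero_of_not_mem _ hnil] at h1
      exact zero_ne_one h1
    have hrest := Finset.add_sum_erase T d hnil
    rw [hd.sum_eq_one, h1, add_eq_left,
      Finset.sum_eq_zero_iff_of_nonneg fun t _ => hd.nonneg t] at hrest
    exact hrest s (Finset.mem_erase.mpr ⟨hs, hsT⟩)
  · exact hd.eq_zero_of_not_mem s hsT

lemma IsDistOn.nil_le_one (hd : IsDistOn T d) : d [] ≤ 1 := by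
  by_cases hnil : [] ∈ T
  · exact hd.sum_eq_one ▸ Finset.single_le_sum (fun t _ => hd.nonneg t) hnil
  · exact (hd.eq_zero_of_not_mem _ hnil).symm ▸ zero_le_one

lemma IsDistOn.isWeightOn_eotStrip (hd : IsDistOn T d) : IsWeightOn T (eotStrip d) where
  nonneg s := by
    unfold eotStrip
    split_ifs
    · exact le_rfl
    · exact div_nonneg (hd.nonneg s) (sub_nonneg.mpr hd.nil_le_one)
  eq_zero_of_not_mem s hs := by simp [eotStrip, hd.eq_zero_of_not_mem s hs]

-- When `d [] = 1` the division in `eotStrip` is by zero, but then `d s = 0` anyway.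
lemma IsDistOn.one_sub_mul_eotStrip (hd : IsDistOn T d) {s : List α} (hs : s ≠ []) :
    (1 - d []) * eotStrip d s = d s := by
  rw [eotStrip, if_neg hs]
  rcases eq_or_ne (d []) 1 with h1 | h1
  · rw [h1, sub_self, zero_mul, hd.eq_zero_of_nil_eq_one h1 hs]
  · exact mul_div_cancel₀ _ (sub_ne_zero.mpr h1.symm)

end Weights

section TokenLevel

variable {α : Type*} (M : List α → List α → ℝ)

lemma strA_nil (n : ℕ) (l : List α) : strA M n l [] = 1 := by
  cases n <;> simp [strA]

lemma strA_congr_fuel {n m : ℕ} {l z : List α} (hn : z.length ≤ n) (hm : z.length ≤ m) :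
    strA M n l z = strA M m l z := by
  induction n generalizing m l z with
  | zero => rw [List.eq_nil_of_length_eq_zero (Nat.le_zero.mp hn), strA_nil, strA_nil]
  | succ n ih =>
    cases z with
    | nil => rw [strA_nil, strA_nil]
    | cons c z =>
      simp only [List.length_cons] at hn hm
      obtain ⟨m, rfl⟩ := Nat.exists_eq_add_one_of_ne_zero (by omega : m ≠ 0)
      simp only [strA, List.cons_ne_nil, if_false]
      exact Finset.sum_congr rfl fun k _ => by
        rw [ih (m := m) (by simp; omega) (by simp; omega)]

lemma strA_eq_strProb {n : ℕ} {l z : List α} (hn : z.length ≤ n) :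
    strA M n l z = strProb M l z :=
  strA_congr_fuel M hn le_rfl

/-- Token-level probability of producing `z` after prompt `l` when the remainder of the current
token is first drawn from `d`; this is what character-level decoding computes mid-token. -/
noncomputable def pendingProb (l : List α) (d : List α → ℝ) (z : List α) : ℝ :=
  ∑ j ∈ Finset.range (z.length + 1), d (z.take j) * strProb M (l ++ z.take j) (z.drop j)

lemma pendingProb_nil (l : List α) (d : List α → ℝ) : pendingProb M l d [] = d [] := by
  simp [pendingProb, strProb, strA]

lemma pendingProb_cons (l : List α) (d : List α → ℝ) (c : α) (z : List α) :
    pendingProb M l d (c :: z) =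
      d [] * strProb M l (c :: z) + pendingProb M (l ++ [c]) (fun s => d (c :: s)) z := by
  rw [pendingProb, List.length_cons, Finset.sum_range_succ']
  simp only [List.take_succ_cons, List.drop_succ_cons, List.take_zero, List.drop_zero,
    List.append_nil, List.append_assoc, List.singleton_append, pendingProb]
  ring

lemma mul_pendingProb (a : ℝ) (l : List α) (d : List α → ℝ) (z : List α) :
    a * pendingProb M l d z = pendingProb M l (fun s => a * d s) z := by
  simp only [pendingProb, Finset.mul_sum, mul_assoc]

lemma strProb_cons (l : List α) (c : α) (z : List α) :
    strProb M l (c :: z) = pendingProb M (l ++ [c]) (fun s => M l (c :: s)) z := by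
  rw [strProb, List.length_cons, strA, if_neg (List.cons_ne_nil _ _)]
  simp only [pendingProb, List.length_cons, List.take_succ_cons, List.drop_succ_cons,
    List.append_assoc, List.singleton_append]
  exact Finset.sum_congr rfl fun j _ => by rw [strA_eq_strProb M (by simp)]

end TokenLevel

section Tables

variable {T : Finset (List A)} {d : List A → ℝ}

lemma sum_filter_head?_tail_eq (hd : IsWeightOn T d) (c : A) (s : List A) :
    ∑ t ∈ T.filter (fun t => t.head? = some c ∧ t.tail = s), d t = d (c :: s) := by
  simp only [Finset.sum_filter, List.head?_eq_some_and_tail_eq_iff, Finset.sum_ite_eq']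
  split_ifs with h
  · rfl
  · exact (hd.eq_zero_of_not_mem _ h).symm

lemma margP_eq_sum_stepT (T : Finset (List A)) (d : List A → ℝ) (c : A) :
    margP T d c = ∑ s ∈ stepT T c, d (c :: s) := by
  have cons_tail : ∀ t ∈ T.filter (fun t => t.head? = some c), c :: t.tail = t := by
    intro t ht
    cases t <;> simp_all
  rw [stepT, Finset.sum_image fun x hx y hy hxy => by rw [← cons_tail x hx, ← cons_tail y hy, hxy]]
  exact Finset.sum_congr rfl fun t ht => by rw [cons_tail t ht]

lemma IsWeightOn.eq_zero_of_margP_eq_zero (hd : IsWeightOn T d) {c : A}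
    (h : margP T d c = 0) (s : List A) : d (c :: s) = 0 := by
  by_cases hs : c :: s ∈ T
  · rw [margP, Finset.sum_eq_zero_iff_of_nonneg fun t _ => hd.nonneg t] at h
    exact h _ (by simp [hs])
  · exact hd.eq_zero_of_not_mem _ hs

lemma stepD_eq_div (hd : IsWeightOn T d) (c : A) (s : List A) :
    stepD T d c s = d (c :: s) / margP T d c := by
  rw [stepD, sum_filter_head?_tail_eq hd]

lemma margP_mul_stepD (hd : IsWeightOn T d) (c : A) (s : List A) :
    margP T d c * stepD T d c s = d (c :: s) := by
  rcases eq_or_ne (margP T d c) 0 with h | h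
  · rw [h, zero_mul, hd.eq_zero_of_margP_eq_zero h]
  · rw [stepD_eq_div hd, mul_div_cancel₀ _ h]

lemma IsWeightOn.isDistOn_stepD (hd : IsWeightOn T d) {c : A} (h : margP T d c ≠ 0) :
    IsDistOn (stepT T c) (stepD T d c) where
  nonneg s := div_nonneg (Finset.sum_nonneg fun t _ => hd.nonneg t)
    (Finset.sum_nonneg fun t _ => hd.nonneg t)
  eq_zero_of_not_mem s hs := by
    rw [stepD_eq_div hd, hd.eq_zero_of_not_mem, zero_div]
    exact fun hmem => hs (Finset.mem_image.mpr ⟨c :: s, by simp [hmem], rfl⟩)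
  sum_eq_one := by
    simp_rw [stepD_eq_div hd, ← Finset.sum_div, ← margP_eq_sum_stepT, div_self h]

end Tables

section CharLevel

variable {M : List A → List A → ℝ} {tok : List A → Finset (List A)}

lemma margP_mul_genA_stepD {n : ℕ} {z : List A}
    (hgen : ∀ lz T d, IsDistOn T d → genA M tok n false lz T d z = pendingProb M lz d z)
    {T : Finset (List A)} {d : List A → ℝ} (hd : IsWeightOn T d) (lz : List A) (c : A) :
    margP T d c * genA M tok n false lz (stepT T c) (stepD T d c) z =
      pendingProb M lz (fun s => d (c :: s)) z := by
  calc margP T d c * genA M tok n false lz (stepT T c) (stepD T d c) z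
      = margP T d c * pendingProb M lz (stepD T d c) z := by
        rcases eq_or_ne (margP T d c) 0 with h | h
        · rw [h, zero_mul, zero_mul]
        · rw [hgen _ _ _ (hd.isDistOn_stepD h)]
    _ = pendingProb M lz (fun s => d (c :: s)) z := by
        simp only [mul_pendingProb, margP_mul_stepD hd]

lemma genA_true_cons {n : ℕ} {z : List A} (hM : ∀ l, IsWeightOn (tok l) (M l))
    (hgen : ∀ lz T d, IsDistOn T d → genA M tok n false lz T d z = pendingProb M lz d z)
    (lz : List A) (T : Finset (List A)) (d : List A → ℝ) (c : A) :
    genA M tok (n + 1) true lz T d (c :: z) = strProb M lz (c :: z) := by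
  rw [genA, margP_mul_genA_stepD hgen (hM lz), strProb_cons]

lemma genA_false_eq_pendingProb (hM : ∀ l, IsWeightOn (tok l) (M l)) (z : List A) :
    ∀ n, 2 * z.length + 2 ≤ n → ∀ lz T d, IsDistOn T d →
      genA M tok n false lz T d z = pendingProb M lz d z := by
  induction z with
  | nil =>
    intro n hn lz T d _
    obtain ⟨n, rfl⟩ := Nat.exists_eq_add_one_of_ne_zero (by omega : n ≠ 0)
    rw [genA, pendingProb_nil]
  | cons c z ih =>
    intro n hn lz T d hd
    simp only [List.length_cons] at hn
    obtain ⟨n, rfl⟩ : ∃ m, n = m + 2 := ⟨n - 2, by omega⟩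
    rw [genA, genA_true_cons hM (ih n (by omega)),
      margP_mul_genA_stepD (ih (n + 1) (by omega)) hd.isWeightOn_eotStrip,
      mul_pendingProb, pendingProb_cons]
    simp only [hd.one_sub_mul_eotStrip (List.cons_ne_nil _ _)]

lemma genA_true_eq_strProb (hM : ∀ l, IsWeightOn (tok l) (M l)) {n : ℕ} {z : List A}
    (hn : 2 * z.length + 1 ≤ n) (lz : List A) (T : Finset (List A)) (d : List A → ℝ) :
    genA M tok n true lz T d z = strProb M lz z := by
  obtain ⟨n, rfl⟩ := Nat.exists_eq_add_one_of_ne_zero (by omega : n ≠ 0)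
  cases z with
  | nil => rw [genA, strProb, strA_nil]
  | cons c z =>
    simp only [List.length_cons] at hn
    exact genA_true_cons hM (genA_false_eq_pendingProb hM z n (by omega)) lz T d c

end CharLevel

theorem decoding_equivalence_general {A : Type*} [DecidableEq A]
    (M : List A → List A → ℝ) (tok : List A → Finset (List A))
    (h0 : ∀ l t, 0 ≤ M l t)
    (hsupp : ∀ l t, t ∉ tok l → M l t = 0) :
    ∀ l z : List A, strProb M l z = charProb M tok l z := fun l z =>
  (genA_true_eq_strProb (fun l => ⟨h0 l, hsupp l⟩) (by omega) l ∅ (fun _ => 0)).symm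

/-- Decoding Equivalence: if `M` assigns to every prompt `l` a PMF over
nonempty tokens with finite support `tok l`, then for every prompt `l` and string `z`,
the probability that token-level generation produces the character sequence `z` equals
the probability that character-level decoding of `M` produces `z`. -/
theorem decoding_equivalence {A : Type*} [DecidableEq A]
    (M : List A → List A → ℝ) (tok : List A → Finset (List A))
    (hne : ∀ l, ∀ t ∈ tok l, t ≠ [])
    (h0 : ∀ l t, 0 ≤ M l t)
    (hsupp : ∀ l t, t ∉ tok l → M l t = 0)
    (hsum : ∀ l, ∑ t ∈ tok l, M l t = 1) :
    ∀ l z : List A, strProb M l z = charProb M tok l z :=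
  decoding_equivalence_general M tok h0 hsupp
end

section
/- Let d be a PMF on a finite set of tokens and let z be a string such that the set S_z = {t : z is a prefix of t} has positive probability. If the character-level conditioning process is applied along the characters of z, the resulting table d_{|z|} satisfies: for every string s, d_{|z|}(s) = d(z·s) / d(S_z), where z·s denotes concatenation. In particular the conditioned table equals the conditional distribution of the token suffix given that the token extends z. -/
variable {A : Type*} [DecidableEq A]

set_option linter.unusedSectionVars false

-- fiberwise sum lemma
lemma fiber_sum (T : Finset (List A)) (d : List A → ℝ) (c : A)
    (p : List A → Prop) [DecidablePred p] :
    ∑ s ∈ (stepT T c).filter p,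
        ∑ t ∈ T.filter (fun t => t.head? = some c ∧ t.tail = s), d t
      = ∑ t ∈ T.filter (fun t => t.head? = some c ∧ p t.tail), d t := by
  rw [← Finset.sum_fiberwise_of_maps_to (g := List.tail)
      (s := T.filter (fun t => t.head? = some c ∧ p t.tail))
      (t := (stepT T c).filter p) ?_ d]
  · refine Finset.sum_congr rfl fun s hs => Finset.sum_congr ?_ fun _ _ => rfl
    simp only [Finset.mem_filter, stepT, Finset.mem_image] at hs ⊢
    ext t
    simp only [Finset.mem_filter]
    constructor
    · rintro ⟨ht, hc, hts⟩
      exact ⟨⟨ht, hc, hts ▸ hs.2⟩, hts⟩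
    · rintro ⟨⟨ht, hc, _⟩, hts⟩
      exact ⟨ht, hc, hts⟩
  · intro t ht
    rw [Finset.mem_filter] at ht ⊢
    refine ⟨?_, ht.2.2⟩
    simp only [stepT, Finset.mem_image]
    exact ⟨t, Finset.mem_filter.mpr ⟨ht.1, ht.2.1⟩, rfl⟩

lemma prefix_split (c : A) (z : List A) (t : List A) :
    (c :: z <+: t) ↔ t.head? = some c ∧ z <+: t.tail := by
  cases t with
  | nil => simp
  | cons a u => simp [List.cons_prefix_cons, eq_comm]

lemma singleton_sum (T : Finset (List A)) (d : List A → ℝ)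
    (hsupp : ∀ t ∉ T, d t = 0) (c : A) (s : List A) :
    ∑ t ∈ T.filter (fun t => t.head? = some c ∧ t.tail = s), d t = d (c :: s) := by
  have : T.filter (fun t => t.head? = some c ∧ t.tail = s)
      = T.filter (fun t => t = c :: s) := by
    apply Finset.filter_congr
    intro t _
    cases t with
    | nil => simp
    | cons a u => simp [eq_comm, and_comm]
  rw [this, Finset.sum_filter, Finset.sum_ite_eq' T (c :: s) d]
  split_ifs with h
  · rfl
  · exact (hsupp _ h).symm

lemma aux_main (z : List A) : ∀ (T : Finset (List A)) (d : List A → ℝ),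
    (∀ t, 0 ≤ d t) → (∀ t ∉ T, d t = 0) → (∑ t ∈ T, d t = 1) →
    (0 < ∑ t ∈ T.filter (fun t => z <+: t), d t) →
    ∀ s : List A,
      (proc T d z).2 s = d (z ++ s) / (∑ t ∈ T.filter (fun t => z <+: t), d t) := by
  induction z with
  | nil =>
    intro T d hd0 hsupp hd1 hz s
    have : T.filter (fun t => ([] : List A) <+: t) = T := by
      simp [List.nil_prefix]
    rw [this] at hz ⊢
    simp [proc, hd1]
  | cons c z ih =>
    intro T d hd0 hsupp hd1 hz s
    -- rewrite the prefix filter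
    have hfilt : T.filter (fun t => c :: z <+: t)
        = T.filter (fun t => t.head? = some c ∧ z <+: t.tail) := by
      apply Finset.filter_congr; intro t _; simp [prefix_split]
    rw [hfilt] at hz ⊢
    set S : ℝ := ∑ t ∈ T.filter (fun t => t.head? = some c ∧ z <+: t.tail), d t with hS
    -- margP positive
    have hsub : T.filter (fun t => t.head? = some c ∧ z <+: t.tail)
        ⊆ T.filter (fun t => t.head? = some c) := by
      intro t ht; simp only [Finset.mem_filter] at ht ⊢; exact ⟨ht.1, ht.2.1⟩
    have hmarg : 0 < margP T d c := by
      refine lt_of_lt_of_le hz (Finset.sum_le_sum_of_subset_of_nonneg hsub ?_)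
      intro t _ _; exact hd0 t
    have hmne : margP T d c ≠ 0 := ne_of_gt hmarg
    -- hypotheses for the step
    have hd0' : ∀ t, 0 ≤ stepD T d c t := by
      intro t
      exact div_nonneg (Finset.sum_nonneg fun t _ => hd0 t) hmarg.le
    have hsupp' : ∀ t ∉ stepT T c, stepD T d c t = 0 := by
      intro t ht
      have : T.filter (fun u => u.head? = some c ∧ u.tail = t) = ∅ := by
        rw [Finset.filter_eq_empty_iff]
        intro u hu hcon
        exact ht (Finset.mem_image.mpr ⟨u, Finset.mem_filter.mpr ⟨hu, hcon.1⟩, hcon.2⟩)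
      simp [stepD, this]
    have hd1' : ∑ t ∈ stepT T c, stepD T d c t = 1 := by
      unfold stepD
      rw [← Finset.sum_div]
      have h := fiber_sum T d c (fun _ => True)
      simp only [and_true] at h
      rw [Finset.filter_true_of_mem (fun _ _ => trivial)] at h
      rw [h]
      exact div_self hmne
    have hsum : ∑ t ∈ (stepT T c).filter (fun t => z <+: t), stepD T d c t
        = S / margP T d c := by
      unfold stepD
      rw [← Finset.sum_div, fiber_sum T d c (fun t => z <+: t)]
    have hz' : 0 < ∑ t ∈ (stepT T c).filter (fun t => z <+: t), stepD T d c t := by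
      rw [hsum]; exact div_pos hz hmarg
    have := ih (stepT T c) (stepD T d c) hd0' hsupp' hd1' hz' s
    show (proc (stepT T c) (stepD T d c) z).2 s = _
    rw [this, hsum]
    unfold stepD
    rw [singleton_sum T d hsupp c (z ++ s), div_div_div_cancel_right₀ hmne]
    rw [List.cons_append]

/-- applying the character-level conditioning process along the characters
of `z` (when the set of tokens extending `z` has positive probability) yields the table
`s ↦ d(z·s) / d(S_z)`, i.e. the conditional distribution of the token suffix given that
the token extends `z`. -/
theorem conditioning_is_bayesian {A : Type*} [DecidableEq A]
    (T : Finset (List A)) (hT : ∀ t ∈ T, t ≠ [])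
    (d : List A → ℝ)
    (hd0 : ∀ t, 0 ≤ d t) (hsupp : ∀ t ∉ T, d t = 0) (hd1 : ∑ t ∈ T, d t = 1)
    (z : List A)
    (hz : 0 < ∑ t ∈ T.filter (fun t => z <+: t), d t) :
    ∀ s : List A,
      (proc T d z).2 s = d (z ++ s) / (∑ t ∈ T.filter (fun t => z <+: t), d t) :=
  aux_main z T d hd0 hsupp hd1 hz
end

section
/- Let d₀ be a PMF on a finite set of tokens over alphabet Σ, and let z be any character string with d₀-prefix-probability π(z) = d₀({t : z ≤ t}) > 0, where z ≤ t means z is a prefix of t. Then the product of the per-step marginal character probabilities ∏_{k=1}^{|z|} p_k along z (where p_k is the marginal of character z_k in the k-th conditioned table) equals π(z), the total probability of tokens extending z. Consequently this product is independent of the order in which renormalizations are performed. -/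
variable {A : Type*} [DecidableEq A]

lemma filter_prefix_cons' (T : Finset (List A)) (c : A) (z : List A) :
    T.filter (fun t => (c :: z) <+: t)
      = T.filter (fun t => t.head? = some c ∧ z <+: t.tail) := by
  apply Finset.filter_congr
  intro t _
  cases t with
  | nil => simp [List.prefix_nil]
  | cons a s => simp [List.cons_prefix_cons, eq_comm]

lemma sum_stepD_filter' (T : Finset (List A)) (d : List A → ℝ) (c : A)
    (P : List A → Prop) [DecidablePred P] :
    ∑ s ∈ (stepT T c).filter P, stepD T d c s
      = (∑ t ∈ T.filter (fun t => t.head? = some c ∧ P t.tail), d t) / margP T d c := by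
  unfold stepD
  rw [← Finset.sum_div]
  congr 1
  rw [← Finset.sum_fiberwise_of_maps_to (g := List.tail) (t := (stepT T c).filter P)
      (fun t ht => ?_) d]
  · apply Finset.sum_congr rfl
    intro s hs
    have hPs : P s := (Finset.mem_filter.mp hs).2
    apply Finset.sum_congr
    · rw [Finset.filter_filter]
      apply Finset.filter_congr
      intro t _
      constructor
      · rintro ⟨h1, h2⟩; exact ⟨⟨h1, h2 ▸ hPs⟩, h2⟩
      · rintro ⟨⟨h1, _⟩, h2⟩; exact ⟨h1, h2⟩
    · intro _ _; rfl
  · rw [Finset.mem_filter] at ht ⊢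
    exact ⟨Finset.mem_image_of_mem _ (Finset.mem_filter.mpr ⟨ht.1, ht.2.1⟩), ht.2.2⟩

/-- for a token PMF `d` and any string `z` with positive prefix
probability `π(z) = ∑_{t : z prefix of t} d t`, the product of the per-step marginal
character probabilities along `z` equals `π(z)`. -/
theorem prod_marginals_eq_prefix_probability {A : Type*} [DecidableEq A]
    (T : Finset (List A)) (hT : ∀ t ∈ T, t ≠ [])
    (d : List A → ℝ)
    (hd0 : ∀ t, 0 ≤ d t) (hsupp : ∀ t ∉ T, d t = 0) (hd1 : ∑ t ∈ T, d t = 1)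
    (z : List A)
    (hz : 0 < ∑ t ∈ T.filter (fun t => z <+: t), d t) :
    prodP T d z = ∑ t ∈ T.filter (fun t => z <+: t), d t := by
  clear hT
  induction z generalizing T d with
  | nil =>
      rw [Finset.filter_true_of_mem (fun t _ => List.nil_prefix)]
      simpa [prodP] using hd1.symm
  | cons c z ih =>
      have hsub : T.filter (fun t => (c :: z) <+: t) ⊆ T.filter (fun t => t.head? = some c) := by
        intro t ht
        rw [Finset.mem_filter] at ht ⊢
        refine ⟨ht.1, ?_⟩
        obtain ⟨r, hr⟩ := ht.2
        rw [← hr]; rfl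
      have hm : 0 < margP T d c :=
        lt_of_lt_of_le hz (Finset.sum_le_sum_of_subset_of_nonneg hsub (fun t _ _ => hd0 t))
      have key : ∑ s ∈ (stepT T c).filter (fun s => z <+: s), stepD T d c s
          = (∑ t ∈ T.filter (fun t => (c :: z) <+: t), d t) / margP T d c := by
        rw [sum_stepD_filter', filter_prefix_cons']
      have hd0' : ∀ s, 0 ≤ stepD T d c s := fun s =>
        div_nonneg (Finset.sum_nonneg fun t _ => hd0 t) hm.le
      have hsupp' : ∀ s ∉ stepT T c, stepD T d c s = 0 := by
        intro s hs
        have : T.filter (fun t => t.head? = some c ∧ t.tail = s) = ∅ := by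
          rw [Finset.filter_eq_empty_iff]
          intro t ht ⟨h1, h2⟩
          exact hs (h2 ▸ Finset.mem_image_of_mem _ (Finset.mem_filter.mpr ⟨ht, h1⟩))
        simp [stepD, this]
      have hd1' : ∑ s ∈ stepT T c, stepD T d c s = 1 := by
        have h := sum_stepD_filter' T d c (fun _ => True)
        simp only [and_true, Finset.filter_true] at h
        rw [h]
        exact div_self hm.ne'
      have hz' : 0 < ∑ s ∈ (stepT T c).filter (fun s => z <+: s), stepD T d c s := by
        rw [key]; exact div_pos hz hm
      have := ih (stepT T c) (stepD T d c) hd0' hsupp' hd1' hz'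
      rw [show prodP T d (c :: z) = margP T d c * prodP (stepT T c) (stepD T d c) z from rfl,
        this, key, mul_div_cancel₀ _ hm.ne']
end
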